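/- Reciprocal transitions: let cap be a credit network on a finite type V, let σ be a state in which the unit transaction (s,t) is feasible (s ≠ t), and let σ_1 be a state obtained from σ by routing a unit payment from s to t along some feasible path. Then for every state τ with score τ = score σ_1, the unit transaction (t,s) is feasible in τ, and routing a unit payment from t to s in τ along any feasible path produces a state τ_1 with score τ_1 = score σ. -/

import Mathlib

/-!
Routing a unit payment from `s` to `t` raises the score of `s` by one, lowers that of `t` by one
and leaves every other score unchanged; the score identity for `τ₁` follows at once.
If `t` could not pay `s` in `τ`, the set `A` of vertices that `t` can pay would contain `t` but
not `s`, and every edge leaving `A` would be saturated in `τ`, so no state has a larger total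
score on `A` than `τ`. Yet `score τ = score σ₁` sums on `A` to one less than `score σ`.
-/

open Finset

/-- A state of a credit network with capacities `cap`: `σ u v + σ v u = cap u v`. -/
def IsState {V : Type*} (cap σ : V → V → ℕ) : Prop :=
  ∀ u v : V, σ u v + σ v u = cap u v

/-- The score vector of a state: total capacity on outgoing edges of each vertex. -/
def score {V : Type*} [Fintype V] (σ : V → V → ℕ) (v : V) : ℕ := ∑ u, σ v u

/-- `u : Fin (k+1) → V` is a feasible path for a unit payment from `s` to `t` in state `σ`. -/
def FeasiblePath {V : Type*} (σ : V → V → ℕ) (s t : V) (k : ℕ) (u : Fin (k + 1) → V) : Prop :=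
  1 ≤ k ∧ Function.Injective u ∧ u 0 = s ∧ u (Fin.last k) = t ∧
    ∀ i : Fin k, 1 ≤ σ (u i.succ) (u i.castSucc)

/-- The unit transaction `(s,t)` is feasible in `σ`. -/
def Feasible {V : Type*} (σ : V → V → ℕ) (s t : V) : Prop :=
  ∃ (k : ℕ) (u : Fin (k + 1) → V), FeasiblePath σ s t k u

/-- `σ'` is the result of routing a unit payment along the path `u` in `σ`. -/
def RouteResult {V : Type*} (σ σ' : V → V → ℕ) (k : ℕ) (u : Fin (k + 1) → V) : Prop :=
  (∀ i : Fin k,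
      σ' (u i.succ) (u i.castSucc) = σ (u i.succ) (u i.castSucc) - 1 ∧
      σ' (u i.castSucc) (u i.succ) = σ (u i.castSucc) (u i.succ) + 1) ∧
  ∀ x y : V,
    (∀ i : Fin k, ¬(x = u i.succ ∧ y = u i.castSucc) ∧ ¬(x = u i.castSucc ∧ y = u i.succ)) →
    σ' x y = σ x y

/-- `σ'` is obtained from `σ` by routing a unit payment from `s` to `t` along some feasible path. -/
def RoutesUnit {V : Type*} (σ σ' : V → V → ℕ) (s t : V) : Prop :=
  ∃ (k : ℕ) (u : Fin (k + 1) → V), FeasiblePath σ s t k u ∧ RouteResult σ σ' k u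


lemma Fin.sum_univ_castSucc_sub_succ {M : Type*} [AddCommGroup M] {n : ℕ} (f : Fin (n + 1) → M) :
    ∑ i : Fin n, (f i.castSucc - f i.succ) = f 0 - f (Fin.last n) := by
  induction n with
  | zero => simp
  | succ n ih =>
    rw [Fin.sum_univ_castSucc, Fin.succ_last]
    simp only [Fin.succ_castSucc]
    have h := ih fun i => f i.castSucc
    simp only [Fin.castSucc_zero] at h
    rw [h]
    abel

section Paths

variable {V : Type*} {σ : V → V → ℕ} {s t v w : V} {k : ℕ} {u : Fin (k + 1) → V}

lemma FeasiblePath.truncate (hp : FeasiblePath σ s t k u) {j : Fin (k + 1)} (hj : j ≠ 0) :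
    FeasiblePath σ s (u j) j (u ∘ Fin.castLE j.isLt) := by
  obtain ⟨-, hinj, h0, -, hedge⟩ := hp
  refine ⟨Nat.one_le_iff_ne_zero.2 (Fin.val_ne_zero_iff.2 hj), hinj.comp (Fin.castLE_injective _),
    h0, rfl, fun i => hedge (Fin.castLE (Nat.le_of_lt_succ j.isLt) i)⟩

lemma feasiblePath_snoc (hinj : Function.Injective u) (h0 : u 0 = s)
    (hedge : ∀ i : Fin k, 1 ≤ σ (u i.succ) (u i.castSucc)) (hw : w ∉ Set.range u)
    (hlast : 1 ≤ σ w (u (Fin.last k))) :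
    FeasiblePath σ s w (k + 1) (Fin.snoc u w) := by
  refine ⟨Nat.le_add_left 1 k, Fin.snoc_injective_of_injective hinj hw, ?_, Fin.snoc_last _ _,
    fun i => ?_⟩
  · rw [← Fin.castSucc_zero, Fin.snoc_castSucc, h0]
  · induction i using Fin.lastCases with
    | last => rwa [Fin.succ_last, Fin.snoc_last, Fin.snoc_castSucc]
    | cast i => rw [Fin.succ_castSucc, Fin.snoc_castSucc, Fin.snoc_castSucc]; exact hedge i

lemma feasible_of_edge (hv : v = s ∨ Feasible σ s v) (hwv : 1 ≤ σ w v) (hws : w ≠ s) :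
    Feasible σ s w := by
  rcases hv with rfl | ⟨k, u, hk, hinj, h0, hl, hedge⟩
  · exact ⟨1, _, feasiblePath_snoc (u := fun _ : Fin 1 => v)
      (Function.injective_of_subsingleton (α := Fin 1) _) rfl Fin.elim0
      (by simpa [eq_comm] using hws) hwv⟩
  · by_cases hw : w ∈ Set.range u
    · obtain ⟨j, rfl⟩ := hw
      exact ⟨j, _, FeasiblePath.truncate ⟨hk, hinj, h0, hl, hedge⟩ (by rintro rfl; exact hws h0)⟩
    · exact ⟨k + 1, _, feasiblePath_snoc hinj h0 hedge hw (hl ▸ hwv)⟩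

end Paths

section Cuts

variable {V : Type*} {cap σ τ : V → V → ℕ}

lemma IsState.two_mul_sum_sum (hσ : IsState cap σ) (A : Finset V) :
    2 * ∑ v ∈ A, ∑ w ∈ A, σ v w = ∑ v ∈ A, ∑ w ∈ A, cap v w := by
  simp_rw [two_mul]
  nth_rw 2 [Finset.sum_comm]
  simp only [← Finset.sum_add_distrib]
  exact Finset.sum_congr rfl fun v _ => Finset.sum_congr rfl fun w _ => hσ v w

lemma IsState.sum_score_le [Fintype V] [DecidableEq V] (hσ : IsState cap σ) (hτ : IsState cap τ)
    {A : Finset V} (hsat : ∀ v ∈ A, ∀ w ∉ A, τ v w = cap v w) :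
    ∑ v ∈ A, score σ v ≤ ∑ v ∈ A, score τ v := by
  have hsplit : ∀ ρ : V → V → ℕ,
      ∑ v ∈ A, score ρ v = ∑ v ∈ A, ∑ w ∈ A, ρ v w + ∑ v ∈ A, ∑ w ∈ Aᶜ, ρ v w := fun ρ => by
    rw [← Finset.sum_add_distrib]
    exact Finset.sum_congr rfl fun v _ => (Finset.sum_add_sum_compl A (ρ v)).symm
  have hinner := hσ.two_mul_sum_sum A
  have hinner' := hτ.two_mul_sum_sum A
  have houter : ∑ v ∈ A, ∑ w ∈ Aᶜ, σ v w ≤ ∑ v ∈ A, ∑ w ∈ Aᶜ, τ v w :=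
    Finset.sum_le_sum fun v hv => Finset.sum_le_sum fun w hw => by
      rw [hsat v hv w (Finset.mem_compl.1 hw), ← hσ v w]
      exact Nat.le_add_right _ _
  rw [hsplit, hsplit]
  omega

lemma IsState.exists_cut_of_not_feasible [Fintype V] {s t : V} (hσ : IsState cap σ)
    (hτ : IsState cap τ) (hts : t ≠ s) (hn : ¬Feasible τ t s) :
    ∃ A : Finset V, t ∈ A ∧ s ∉ A ∧ ∑ v ∈ A, score σ v ≤ ∑ v ∈ A, score τ v := by
  classical
  refine ⟨Finset.univ.filter fun v => v = t ∨ Feasible τ t v, by simp, by simp [hts.symm, hn],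
    hσ.sum_score_le hτ fun v hv w hw => ?_⟩
  simp only [Finset.mem_filter, Finset.mem_univ, true_and, not_or] at hv hw
  have hwv : τ w v = 0 := by
    by_contra h
    exact hw.2 (feasible_of_edge hv (Nat.one_le_iff_ne_zero.2 h) hw.1)
  simpa [hwv] using hτ v w

end Cuts

section Routing

variable {V : Type*} [DecidableEq V] {σ σ' : V → V → ℕ} {s t : V} {k : ℕ} {u : Fin (k + 1) → V}

lemma RouteResult.cast_apply_eq (hp : FeasiblePath σ s t k u) (hr : RouteResult σ σ' k u)
    (x y : V) :
    (σ' x y : ℤ) = σ x y + ∑ i : Fin k, ((if x = u i.castSucc ∧ y = u i.succ then 1 else 0) -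
      (if x = u i.succ ∧ y = u i.castSucc then 1 else 0)) := by
  obtain ⟨-, hinj, -, -, hedge⟩ := hp
  obtain ⟨hchg, hoth⟩ := hr
  have hrev : ∀ i j : Fin k, ¬(i.castSucc = j.succ ∧ i.succ = j.castSucc) := by
    rintro i j ⟨h1, h2⟩
    have := congrArg Fin.val h1
    have := congrArg Fin.val h2
    simp only [Fin.val_castSucc, Fin.val_succ] at *
    omega
  have hrev' : ∀ i j : Fin k, ¬(i.succ = j.castSucc ∧ i.castSucc = j.succ) :=
    fun i j h => hrev j i ⟨h.1.symm, h.2.symm⟩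
  by_cases hf : ∃ i : Fin k, x = u i.castSucc ∧ y = u i.succ
  · obtain ⟨i, rfl, rfl⟩ := hf
    simp [hinj.eq_iff, hrev, (hchg i).2]
  by_cases hb : ∃ i : Fin k, x = u i.succ ∧ y = u i.castSucc
  · obtain ⟨i, rfl, rfl⟩ := hb
    simp [hinj.eq_iff, hrev', (hchg i).1, Nat.cast_sub (hedge i), sub_eq_add_neg]
  · push Not at hf hb
    rw [hoth x y fun i => ⟨fun h => hb i h.1 h.2, fun h => hf i h.1 h.2⟩, left_eq_add]
    exact Finset.sum_eq_zero fun i _ => by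
      rw [if_neg fun h => hf i h.1 h.2, if_neg fun h => hb i h.1 h.2, sub_zero]

variable [Fintype V]

lemma RoutesUnit.score_eq (h : RoutesUnit σ σ' s t) (v : V) :
    (score σ' v : ℤ) = score σ v + (if v = s then 1 else 0) - (if v = t then 1 else 0) := by
  obtain ⟨k, u, hp, hr⟩ := h
  have hrow : ∀ a b : V, ∑ y, (if v = a ∧ y = b then (1 : ℤ) else 0) = if v = a then 1 else 0 := by
    intro a b
    simp [ite_and]
  calc (score σ' v : ℤ)
      = ∑ y, ((σ v y : ℤ) + ∑ i : Fin k, ((if v = u i.castSucc ∧ y = u i.succ then 1 else 0) -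
          (if v = u i.succ ∧ y = u i.castSucc then 1 else 0))) := by
        push_cast [score]
        exact Finset.sum_congr rfl fun y _ => hr.cast_apply_eq hp v y
    _ = score σ v + ∑ i : Fin k,
          ((if v = u i.castSucc then 1 else 0) - (if v = u i.succ then 1 else 0)) := by
        rw [Finset.sum_add_distrib, Finset.sum_comm]
        simp only [Finset.sum_sub_distrib, hrow, score, Nat.cast_sum]
    _ = score σ v + (if v = s then 1 else 0) - (if v = t then 1 else 0) := by
        rw [Fin.sum_univ_castSucc_sub_succ fun j => if v = u j then (1 : ℤ) else 0, hp.2.2.1,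
          hp.2.2.2.1, add_sub_assoc]

lemma RoutesUnit.sum_score_eq (h : RoutesUnit σ σ' s t) (A : Finset V) :
    ∑ v ∈ A, (score σ' v : ℤ) =
      ∑ v ∈ A, (score σ v : ℤ) + (if s ∈ A then 1 else 0) - (if t ∈ A then 1 else 0) := by
  simp [h.score_eq, Finset.sum_sub_distrib, Finset.sum_add_distrib]

end Routing

theorem stmt4_general {V : Type*} [Fintype V]
    (cap : V → V → ℕ)
    (σ σ₁ : V → V → ℕ) (hσ : IsState cap σ)
    (s t : V) (hst : s ≠ t) (hroute : RoutesUnit σ σ₁ s t) :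
    ∀ τ : V → V → ℕ, IsState cap τ → score τ = score σ₁ →
      Feasible τ t s ∧ ∀ τ₁ : V → V → ℕ, RoutesUnit τ τ₁ t s → score τ₁ = score σ := by
  classical
  intro τ hτ hscore
  refine ⟨?_, fun τ₁ hτ₁ => ?_⟩
  · by_contra hn
    obtain ⟨A, htA, hsA, hle⟩ := hσ.exists_cut_of_not_feasible hτ hst.symm hn
    have hcut := hroute.sum_score_eq A
    rw [← hscore, if_neg hsA, if_pos htA] at hcut
    zify at hle
    omega
  · funext v
    have h₁ := hτ₁.score_eq v
    have h₀ := hroute.score_eq v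
    rw [hscore] at h₁
    split_ifs at h₁ h₀ <;> omega

/-- Reciprocal transitions between cycle-reachability classes. -/
theorem stmt4 {V : Type*} [Fintype V]
    (cap : V → V → ℕ) (hcap_symm : ∀ u v : V, cap u v = cap v u)
    (hcap_diag : ∀ v : V, cap v v = 0)
    (σ σ₁ : V → V → ℕ) (hσ : IsState cap σ)
    (s t : V) (hst : s ≠ t) (hroute : RoutesUnit σ σ₁ s t) :
    ∀ τ : V → V → ℕ, IsState cap τ → score τ = score σ₁ →
      Feasible τ t s ∧ ∀ τ₁ : V → V → ℕ, RoutesUnit τ τ₁ t s → score τ₁ = score σ :=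
  stmt4_general cap σ σ₁ hσ s t hst hroute
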